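/- Let G be a finite connected simple graph. Then b(G) ≤ b(T(G)) ≤ b(G) + 1, where T(G) is the total graph of G. -/

import Mathlib

open SimpleGraph

/-- `b` is a burning sequence of length `k` for `G`: the source `b i` is burned at time `i + 1`
(for `i : Fin k`), and every vertex must be within distance `k - (i + 1)` of some source `b i`
(expressed via the existence of a short enough walk, so that unreachable vertices are never
considered burned). -/
def IsBurningSeq {V : Type*} (G : SimpleGraph V) {k : ℕ} (b : Fin k → V) : Prop :=
  ∀ v : V, ∃ i : Fin k, ∃ w : G.Walk v (b i), w.length + (i : ℕ) + 1 ≤ k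

/-- The burning number of `G`: the least `k` admitting a burning sequence of length `k`. -/
noncomputable def burningNumber {V : Type*} (G : SimpleGraph V) : ℕ :=
  sInf {k : ℕ | ∃ b : Fin k → V, IsBurningSeq G b}

/-- The total graph of `G`, on vertex set `V ⊕ E(G)`: two vertices of `G` are adjacent iff
adjacent in `G`; two edges are adjacent iff distinct and sharing an endpoint; a vertex and
an edge are adjacent iff the vertex is an endpoint of the edge. -/
def totalGraph {V : Type*} (G : SimpleGraph V) : SimpleGraph (V ⊕ G.edgeSet) :=
  SimpleGraph.fromRel (fun x y =>
    match x, y with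
    | Sum.inl u, Sum.inl v => G.Adj u v
    | Sum.inr e, Sum.inr f => ∃ v : V, v ∈ (e : Sym2 V) ∧ v ∈ (f : Sym2 V)
    | Sum.inl v, Sum.inr e => v ∈ (e : Sym2 V)
    | Sum.inr _, Sum.inl _ => False)

/-! Appending one arbitrary source to a burning sequence of `G` burns `T(G)`: every edge of `G`
is adjacent in `T(G)` to its endpoints, so it burns one round after them. Conversely, let
`S x ⊆ V` be `{v}` for a vertex `v` and the two endpoints for an edge of `G`. If `x` and `y` are
adjacent in `T(G)`, every point of `S x` is equal or adjacent in `G` to some point of `S y`; hence a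
walk of length `n` in `T(G)` from a source `x` to a vertex `v` gives a walk of length at most `n`
from *every* point of `S x` to `v`, and replacing each source `x` by an arbitrary point of `S x`
burns `G` in the same number of rounds. -/

section

variable {V W : Type*} {G : SimpleGraph V} {H : SimpleGraph W}

theorem IsBurningSeq.burningNumber_le {k : ℕ} {b : Fin k → V} (hb : IsBurningSeq G b) :
    burningNumber G ≤ k :=
  Nat.sInf_le ⟨b, hb⟩

theorem IsBurningSeq.exists_burningNumber {k : ℕ} {b : Fin k → V} (hb : IsBurningSeq G b) :
    ∃ c : Fin (burningNumber G) → V, IsBurningSeq G c :=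
  Nat.sInf_mem (s := {k | ∃ b : Fin k → V, IsBurningSeq G b}) ⟨k, b, hb⟩

theorem SimpleGraph.Connected.exists_isBurningSeq [Fintype V] (hG : G.Connected) :
    ∃ k, ∃ b : Fin k → V, IsBurningSeq G b := by
  classical
  obtain ⟨v₀⟩ := hG.nonempty
  have hcard : 0 < Fintype.card V := Fintype.card_pos_iff.2 ⟨v₀⟩
  refine ⟨Fintype.card V, fun _ => v₀, fun v => ?_⟩
  obtain ⟨p⟩ := hG.preconnected v v₀
  exact ⟨⟨0, hcard⟩, p.toPath, p.toPath.2.length_lt⟩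

theorem IsBurningSeq.snoc_comp {k : ℕ} {b : Fin k → V} (hb : IsBurningSeq G b) (f : G →g H)
    (hf : ∀ y, ∃ v, f v = y ∨ H.Adj y (f v)) (x : W) :
    IsBurningSeq H (Fin.snoc (f ∘ b) x : Fin (k + 1) → W) := by
  intro y
  obtain ⟨v, hv⟩ := hf y
  obtain ⟨i, w, hw⟩ := hb v
  have hwalk : ∃ p : H.Walk y (f (b i)), p.length ≤ w.length + 1 := by
    rcases hv with rfl | hadj
    · exact ⟨w.map f, by simp⟩
    · exact ⟨.cons hadj (w.map f), by simp⟩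
  obtain ⟨p, hp⟩ := hwalk
  refine ⟨i.castSucc, p.copy rfl (by simp), ?_⟩
  simp only [Walk.length_copy, Fin.val_castSucc]
  omega

theorem SimpleGraph.Walk.exists_walk_length_le_of_forall_adj (S : W → Set V)
    (hS : ∀ x y, H.Adj x y → ∀ a ∈ S x, ∃ b ∈ S y, a = b ∨ G.Adj a b) {x y : W}
    (w : H.Walk x y) {a : V} (ha : a ∈ S x) :
    ∃ b ∈ S y, ∃ p : G.Walk a b, p.length ≤ w.length := by
  induction w generalizing a with
  | nil => exact ⟨a, ha, .nil, le_rfl⟩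
  | cons hadj w ih =>
    obtain ⟨a', ha', hstep⟩ := hS _ _ hadj a ha
    obtain ⟨b, hb, p, hp⟩ := ih ha'
    rcases hstep with rfl | hadj'
    · exact ⟨b, hb, p, by rw [Walk.length_cons]; omega⟩
    · exact ⟨b, hb, .cons hadj' p, by simpa using hp⟩

theorem IsBurningSeq.exists_of_forall_adj {k : ℕ} {b : Fin k → W} (hb : IsBurningSeq H b)
    (S : W → Set V) (hS : ∀ x y, H.Adj x y → ∀ a ∈ S x, ∃ b ∈ S y, a = b ∨ G.Adj a b)
    (hne : ∀ x, (S x).Nonempty) (hsingle : ∀ v, ∃ y, S y = {v}) :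
    ∃ c : Fin k → V, IsBurningSeq G c := by
  choose f hf using hne
  refine ⟨f ∘ b, fun v => ?_⟩
  obtain ⟨y, hy⟩ := hsingle v
  obtain ⟨i, w, hw⟩ := hb y
  obtain ⟨v', hv', p, hp⟩ := w.reverse.exists_walk_length_le_of_forall_adj S hS (hf (b i))
  rw [hy, Set.mem_singleton_iff] at hv'
  subst hv'
  exact ⟨i, p.reverse, by simp only [Walk.length_reverse] at hp ⊢; omega⟩

theorem SimpleGraph.eq_or_adj_of_mem_edgeSet {e : Sym2 V} (he : e ∈ G.edgeSet) {a b : V}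
    (ha : a ∈ e) (hb : b ∈ e) : a = b ∨ G.Adj a b := by
  refine or_iff_not_imp_left.2 fun hab => ?_
  rwa [(Sym2.mem_and_mem_iff hab).1 ⟨ha, hb⟩] at he

namespace totalGraph

def inlHom (G : SimpleGraph V) : G →g totalGraph G where
  toFun := Sum.inl
  map_rel' h := by simp [totalGraph, h.ne, h]

theorem adj_inr_inl {e : G.edgeSet} {v : V} (h : v ∈ (e : Sym2 V)) :
    (totalGraph G).Adj (.inr e) (.inl v) := by
  simp [totalGraph, h]

def endpoints (G : SimpleGraph V) : V ⊕ G.edgeSet → Set V :=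
  Sum.elim (fun v => {v}) (fun e => {v | v ∈ (e : Sym2 V)})

theorem exists_mem_endpoints_of_adj {x y : V ⊕ G.edgeSet} (h : (totalGraph G).Adj x y) :
    ∀ a ∈ endpoints G x, ∃ b ∈ endpoints G y, a = b ∨ G.Adj a b := by
  rcases x with u | e <;> rcases y with v | f <;>
    simp only [totalGraph, fromRel_adj, endpoints, Sum.elim_inl, Sum.elim_inr, ne_eq,
      reduceCtorEq, not_false_eq_true, true_and, or_false, false_or, SetLike.setOfPred_mem_eq,
      SetLike.mem_coe, Set.mem_singleton_iff, exists_eq_left, forall_eq] at h ⊢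
  · exact .inr (h.2.elim id .symm)
  · exact ⟨u, h, .inl rfl⟩
  · exact fun a ha => G.eq_or_adj_of_mem_edgeSet e.2 ha h
  · obtain ⟨t, hte, htf⟩ := h.2.elim id fun ⟨t, htf, hte⟩ => ⟨t, hte, htf⟩
    exact fun a ha => ⟨t, htf, G.eq_or_adj_of_mem_edgeSet e.2 ha hte⟩

end totalGraph

theorem IsBurningSeq.totalGraph_snoc {k : ℕ} {b : Fin k → V} (hb : IsBurningSeq G b)
    (x : V ⊕ G.edgeSet) :
    IsBurningSeq (totalGraph G) (Fin.snoc (Sum.inl ∘ b) x : Fin (k + 1) → V ⊕ G.edgeSet) :=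
  hb.snoc_comp (totalGraph.inlHom G) (fun
    | .inl v => ⟨v, .inl rfl⟩
    | .inr e => ⟨_, .inr (totalGraph.adj_inr_inl (Sym2.out_fst_mem e.1))⟩) x

theorem IsBurningSeq.exists_of_totalGraph {k : ℕ} {b : Fin k → V ⊕ G.edgeSet}
    (hb : IsBurningSeq (totalGraph G) b) : ∃ c : Fin k → V, IsBurningSeq G c :=
  hb.exists_of_forall_adj (totalGraph.endpoints G)
    (fun _ _ h => totalGraph.exists_mem_endpoints_of_adj h)
    (fun
      | .inl v => ⟨v, rfl⟩
      | .inr e => ⟨_, Sym2.out_fst_mem e.1⟩)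
    (fun v => ⟨.inl v, rfl⟩)

end

/-- For a connected graph `G`, `b(G) ≤ b(T(G)) ≤ b(G) + 1`, where `T(G)` is the total
graph of `G`. -/
theorem burningNumber_totalGraph_bounds {V : Type*} [Fintype V]
    (G : SimpleGraph V) (hconn : G.Connected) :
    burningNumber G ≤ burningNumber (totalGraph G) ∧
      burningNumber (totalGraph G) ≤ burningNumber G + 1 := by
  obtain ⟨k, b, hb⟩ := hconn.exists_isBurningSeq
  obtain ⟨c, hc⟩ := hb.exists_burningNumber
  obtain ⟨v⟩ := hconn.nonempty
  have hcT := hc.totalGraph_snoc (.inl v)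
  obtain ⟨d, hd⟩ := hcT.exists_burningNumber
  obtain ⟨c', hc'⟩ := hd.exists_of_totalGraph
  exact ⟨hc'.burningNumber_le, hcT.burningNumber_le⟩
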